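/- If A is an invertible K×K diagonal matrix and Δ = A + B × P is invertible (B symmetric K×K, P = diag(p_1,...,p_K)), then the uniform-block matrix N = A ∘ I[p] + B ∘ J[p] is invertible with inverse N^{-1} = A^{-1} ∘ I[p] + (−Δ^{-1} × B × A^{-1}) ∘ J[p]. -/

import Mathlib

open Matrix BigOperators

/-- Block-diagonal expansion `A ∘ I[p]`: the `p × p` matrix `Bdiag(a₁ I_{p₁}, …, a_K I_{p_K})`,
indexed by the sigma type `Σ k, Fin (p k)`. -/
def blockI {K : ℕ} (p : Fin K → ℕ) (a : Fin K → ℝ) :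
    Matrix (Σ k, Fin (p k)) (Σ k, Fin (p k)) ℝ :=
  Matrix.diagonal (fun i => a i.1)

/-- Block all-ones expansion `B ∘ J[p]`: the `p × p` matrix whose `(k,k')` block is
`B k k' • 1_{p_k × p_{k'}}`. -/
def blockJ {K : ℕ} (p : Fin K → ℕ) (B : Matrix (Fin K) (Fin K) ℝ) :
    Matrix (Σ k, Fin (p k)) (Σ k, Fin (p k)) ℝ :=
  fun i j => B i.1 j.1

/-- `P = diag(p₁, …, p_K)`. -/
def Pmat {K : ℕ} (p : Fin K → ℕ) : Matrix (Fin K) (Fin K) ℝ :=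
  Matrix.diagonal (fun k => (p k : ℝ))

/-!
Matrices `blockI p a + blockJ p M` form an algebra: their product is again of this form, with
`I`-part `a * c` and `J`-part `A N + M C + M P N` (writing `A = diagonal a`, `C = diagonal c`).
Taking `c = a⁻¹` makes the `I`-part `1`, and with `N = -Δ⁻¹ B A⁻¹` the `J`-part is
`Δ N + B A⁻¹ = 0`.
-/

section BlockAlgebra

variable {K : ℕ} (p : Fin K → ℕ)

lemma blockI_one : blockI p 1 = 1 :=
  diagonal_one

lemma blockJ_zero : blockJ p 0 = 0 :=
  rfl

lemma blockJ_add (M N : Matrix (Fin K) (Fin K) ℝ) :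
    blockJ p (M + N) = blockJ p M + blockJ p N :=
  rfl

lemma blockI_mul_blockI (a c : Fin K → ℝ) : blockI p a * blockI p c = blockI p (a * c) :=
  diagonal_mul_diagonal _ _

lemma blockI_mul_blockJ (a : Fin K → ℝ) (M : Matrix (Fin K) (Fin K) ℝ) :
    blockI p a * blockJ p M = blockJ p (diagonal a * M) := by
  ext i j
  simp [blockI, blockJ, diagonal_mul]

lemma blockJ_mul_blockI (M : Matrix (Fin K) (Fin K) ℝ) (c : Fin K → ℝ) :
    blockJ p M * blockI p c = blockJ p (M * diagonal c) := by
  ext i j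
  simp [blockI, blockJ, mul_diagonal]

-- The sum over the `p k` indices of block `k` produces the factor `p k`.
lemma blockJ_mul_blockJ (M N : Matrix (Fin K) (Fin K) ℝ) :
    blockJ p M * blockJ p N = blockJ p (M * Pmat p * N) := by
  ext i j
  rw [mul_apply, ← Finset.univ_sigma_univ, Finset.sum_sigma]
  simp only [blockJ]
  rw [mul_apply]
  simp only [Pmat, mul_diagonal, Finset.sum_const, Finset.card_univ, Fintype.card_fin,
    nsmul_eq_mul]
  exact Finset.sum_congr rfl fun _ _ => by ring

lemma blockI_add_blockJ_mul (a c : Fin K → ℝ) (M N : Matrix (Fin K) (Fin K) ℝ) :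
    (blockI p a + blockJ p M) * (blockI p c + blockJ p N) =
      blockI p (a * c) + blockJ p (diagonal a * N + M * diagonal c + M * Pmat p * N) := by
  rw [add_mul, mul_add, mul_add, blockI_mul_blockI, blockI_mul_blockJ, blockJ_mul_blockI,
    blockJ_mul_blockJ, blockJ_add, blockJ_add, add_assoc, add_assoc]

end BlockAlgebra

theorem blockHadamard_inv_general {K : ℕ} (p : Fin K → ℕ)
    (a : Fin K → ℝ) (B : Matrix (Fin K) (Fin K) ℝ)
    (hA : IsUnit (Matrix.diagonal a))
    (hΔ : IsUnit (Matrix.diagonal a + B * Pmat p)) :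
    IsUnit (blockI p a + blockJ p B) ∧
    (blockI p a + blockJ p B)⁻¹ =
      blockI p (fun k => (a k)⁻¹) +
        blockJ p (-((Matrix.diagonal a + B * Pmat p)⁻¹ * B * (Matrix.diagonal a)⁻¹)) := by
  set Δ := diagonal a + B * Pmat p
  set C := -(Δ⁻¹ * B * (diagonal a)⁻¹)
  have ha : a * (fun k => (a k)⁻¹) = 1 :=
    funext fun k => mul_inv_cancel₀ ((isUnit_diagonal.mp hA).apply k).ne_zero
  have hA_inv : (diagonal a)⁻¹ = diagonal (fun k => (a k)⁻¹) :=
    inv_eq_right_inv (by rw [diagonal_mul_diagonal, ← Pi.mul_def, ha]; exact diagonal_one)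
  have hΔC : Δ * C = -(B * (diagonal a)⁻¹) := by
    rw [mul_neg, Matrix.mul_assoc,
      mul_nonsing_inv_cancel_left _ _ ((isUnit_iff_isUnit_det _).mp hΔ)]
  have hN : (blockI p a + blockJ p B) * (blockI p (fun k => (a k)⁻¹) + blockJ p C) = 1 := by
    rw [blockI_add_blockJ_mul, ha, blockI_one, ← hA_inv, add_right_comm, ← add_mul, hΔC,
      neg_add_cancel, blockJ_zero, add_zero]
  exact ⟨.of_mul_eq_one _ hN, inv_eq_right_inv hN⟩

/-- Inverse of a uniform-block matrix: if `A` and `Δ = A + B P` are invertible then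
`N = A ∘ I[p] + B ∘ J[p]` is invertible with
`N⁻¹ = A⁻¹ ∘ I[p] + (−Δ⁻¹ B A⁻¹) ∘ J[p]`. -/
theorem blockHadamard_inv {K : ℕ} (p : Fin K → ℕ)
    (a : Fin K → ℝ) (B : Matrix (Fin K) (Fin K) ℝ) (hB : B.IsSymm)
    (hA : IsUnit (Matrix.diagonal a))
    (hΔ : IsUnit (Matrix.diagonal a + B * Pmat p)) :
    IsUnit (blockI p a + blockJ p B) ∧
    (blockI p a + blockJ p B)⁻¹ =
      blockI p (fun k => (a k)⁻¹) +
        blockJ p (-((Matrix.diagonal a + B * Pmat p)⁻¹ * B * (Matrix.diagonal a)⁻¹)) :=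
  blockHadamard_inv_general p a B hA hΔ
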